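/- arXiv:2511.01686 — 2 statements merged into one kernel-verified Lean document; each statement's English description precedes it below -/
import Mathlib

section
/- Let X, H be Hermitian m×m matrices, ρ the Gibbs state for H, C(t) = log Tr(exp(tX-H)) - log Tr(exp(-H)), and I the Legendre transform of C. Then for every state φ on M_m(ℂ), S(φ‖ρ) ≥ I(φ(X)). -/
open Matrix
open scoped ComplexOrder

/-- The matrix logarithm of a Hermitian matrix, via the functional calculus
(junk value `0` for non-Hermitian matrices). -/
noncomputable def matLog {m : ℕ} (A : Matrix (Fin m) (Fin m) ℂ) : Matrix (Fin m) (Fin m) ℂ :=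
  if hA : A.IsHermitian then hA.cfc Real.log else 0

/-- The quantum relative entropy `S(φ‖ρ) = Tr(D_φ log D_φ) - Tr(D_φ log D_ρ)` of two
density matrices. -/
noncomputable def relEnt {m : ℕ} (Dφ Dρ : Matrix (Fin m) (Fin m) ℂ) : ℝ :=
  (Matrix.trace (Dφ * matLog Dφ) - Matrix.trace (Dφ * matLog Dρ)).re

lemma expCfc {m : ℕ} (A : Matrix (Fin m) (Fin m) ℂ) (hA : A.IsHermitian) :
    NormedSpace.exp A = hA.cfc Real.exp := by
  have hU : ((hA.eigenvectorUnitary : Matrix (Fin m) (Fin m) ℂ)) * star (hA.eigenvectorUnitary : Matrix (Fin m) (Fin m) ℂ) = 1 :=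
    (Matrix.mem_unitaryGroup_iff).mp hA.eigenvectorUnitary.2
  have hinv : (hA.eigenvectorUnitary : Matrix (Fin m) (Fin m) ℂ)⁻¹ = star (hA.eigenvectorUnitary : Matrix (Fin m) (Fin m) ℂ) :=
    Matrix.inv_eq_right_inv hU
  have hconj := Matrix.exp_conj (hA.eigenvectorUnitary : Matrix (Fin m) (Fin m) ℂ)
    (diagonal (RCLike.ofReal ∘ hA.eigenvalues)) (Unitary.toUnits hA.eigenvectorUnitary).isUnit
  rw [hinv] at hconj
  have hdiag : NormedSpace.exp (diagonal (RCLike.ofReal ∘ hA.eigenvalues) : Matrix (Fin m) (Fin m) ℂ)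
      = diagonal (RCLike.ofReal ∘ Real.exp ∘ hA.eigenvalues) := by
    rw [Matrix.exp_diagonal]
    have : NormedSpace.exp (RCLike.ofReal ∘ hA.eigenvalues : Fin m → ℂ)
        = RCLike.ofReal ∘ Real.exp ∘ hA.eigenvalues := by
      funext i
      rw [Pi.exp_def]
      simp only [Function.comp_apply, ← Complex.exp_eq_exp_ℂ, RCLike.ofReal_real_eq_id, id]
      exact (Complex.ofReal_exp _).symm
    rw [this]
  rw [Matrix.IsHermitian.cfc, Unitary.conjStarAlgAut_apply]
  conv_lhs => rw [hA.spectral_theorem, Unitary.conjStarAlgAut_apply]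
  rw [hconj, hdiag]

section helpers
variable {m : ℕ} {A : Matrix (Fin m) (Fin m) ℂ} (hA : A.IsHermitian)

lemma cfcMul (f g : ℝ → ℝ) : hA.cfc f * hA.cfc g = hA.cfc (fun x => f x * g x) := by
  have hU : star (hA.eigenvectorUnitary : Matrix (Fin m) (Fin m) ℂ) * (hA.eigenvectorUnitary : Matrix (Fin m) (Fin m) ℂ) = 1 :=
    (Matrix.mem_unitaryGroup_iff').mp hA.eigenvectorUnitary.2
  simp only [Matrix.IsHermitian.cfc, Unitary.conjStarAlgAut_apply]
  rw [show ∀ (U V D D' : Matrix (Fin m) (Fin m) ℂ), (U * D * V) * (U * D' * V)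
      = U * (D * (V * U) * D') * V from fun U V D D' => by noncomm_ring, hU, mul_one,
    diagonal_mul_diagonal]
  have : (fun i => (RCLike.ofReal ∘ f ∘ hA.eigenvalues) i * (RCLike.ofReal ∘ g ∘ hA.eigenvalues) i
      : Fin m → ℂ) = RCLike.ofReal ∘ (fun x => f x * g x) ∘ hA.eigenvalues := by
    funext i; simp
  rw [this]

lemma cfcFunId : hA.cfc (fun x => x) = A := by
  conv_rhs => rw [hA.spectral_theorem]
  rfl

lemma traceCfc (f : ℝ → ℝ) : Matrix.trace (hA.cfc f) = ((∑ i, f (hA.eigenvalues i) : ℝ) : ℂ) := by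
  rw [Matrix.IsHermitian.cfc, Unitary.conjStarAlgAut_apply, Matrix.trace_mul_cycle,
    (Matrix.mem_unitaryGroup_iff').mp hA.eigenvectorUnitary.2, one_mul, Matrix.trace_diagonal]
  push_cast
  rfl

lemma traceMulCfc (f : ℝ → ℝ) :
    Matrix.trace (A * hA.cfc f) = ((∑ i, hA.eigenvalues i * f (hA.eigenvalues i) : ℝ) : ℂ) := by
  have h1 : hA.cfc (fun x => x) * hA.cfc f = A * hA.cfc f := by rw [cfcFunId]
  rw [← h1, cfcMul hA]
  exact traceCfc hA _

end helpers

lemma gibbs_classical {ι : Type*} [Fintype ι] (p a : ι → ℝ) (hp : ∀ i, 0 ≤ p i)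
    (hp1 : ∑ i, p i = 1) :
    ∑ i, (p i * a i - p i * Real.log (p i)) ≤ Real.log (∑ i, Real.exp (a i)) := by
  classical
  set s : Finset ι := Finset.univ.filter (fun i => p i ≠ 0) with hs
  have hs1 : ∑ i ∈ s, p i = 1 := by rw [hs, Finset.sum_filter_ne_zero]; exact hp1
  have hpos : ∀ i ∈ s, 0 < p i := fun i hi =>
    lt_of_le_of_ne (hp i) (Ne.symm (Finset.mem_filter.mp hi).2)
  have hLHS : ∑ i, (p i * a i - p i * Real.log (p i))
      = ∑ i ∈ s, (p i * a i - p i * Real.log (p i)) := by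
    refine (Finset.sum_subset (Finset.filter_subset _ _) ?_).symm
    intro i _ hi
    have : p i = 0 := by
      by_contra h
      exact hi (Finset.mem_filter.mpr ⟨Finset.mem_univ i, h⟩)
    simp [this]
  have hjensen := (strictConcaveOn_log_Ioi.concaveOn).le_map_sum
    (t := s) (w := p) (p := fun i => Real.exp (a i) / p i)
    (fun i hi => hp i) hs1
    (fun i hi => Set.mem_Ioi.mpr (div_pos (Real.exp_pos _) (hpos i hi)))
  simp only [smul_eq_mul] at hjensen
  have h1 : ∀ i ∈ s, p i * Real.log (Real.exp (a i) / p i)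
      = p i * a i - p i * Real.log (p i) := by
    intro i hi
    rw [Real.log_div (Real.exp_ne_zero _) (hpos i hi).ne', Real.log_exp, mul_sub]
  have h2 : ∀ i ∈ s, p i * (Real.exp (a i) / p i) = Real.exp (a i) := by
    intro i hi
    rw [mul_div_cancel₀ _ (hpos i hi).ne']
  rw [Finset.sum_congr rfl h1, Finset.sum_congr rfl h2] at hjensen
  have hsub : ∑ i ∈ s, Real.exp (a i) ≤ ∑ i, Real.exp (a i) :=
    Finset.sum_le_sum_of_subset_of_nonneg (Finset.filter_subset _ _)
      (fun i _ _ => (Real.exp_pos _).le)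
  have hspos : 0 < ∑ i ∈ s, Real.exp (a i) := by
    have : s.Nonempty := by
      by_contra h
      rw [Finset.not_nonempty_iff_eq_empty] at h
      rw [h, Finset.sum_empty] at hs1
      norm_num at hs1
    exact Finset.sum_pos (fun i _ => Real.exp_pos _) this
  rw [hLHS]
  exact hjensen.trans (Real.log_le_log hspos hsub)



lemma gibbs_var {m : ℕ} (A Dφ : Matrix (Fin m) (Fin m) ℂ) (hA : A.IsHermitian)
    (hφ : Dφ.PosSemidef) (hφ1 : Matrix.trace Dφ = 1) :
    (Matrix.trace (Dφ * A)).re - (Matrix.trace (Dφ * matLog Dφ)).re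
      ≤ Real.log ((Matrix.trace (NormedSpace.exp A)).re) := by
  classical
  have hφH : Dφ.IsHermitian := hφ.1
  set p : Fin m → ℝ := hφH.eigenvalues with hp_def
  set ν : Fin m → ℝ := hA.eigenvalues with hν_def
  have hp0 : ∀ i, 0 ≤ p i := hφ.eigenvalues_nonneg
  have hp1 : ∑ i, p i = 1 := by
    have h := traceCfc hφH (fun x => x)
    rw [cfcFunId hφH, hφ1] at h
    exact_mod_cast h.symm
  have hm : Nonempty (Fin m) := by
    rcases Nat.eq_zero_or_pos m with rfl | hm
    · simp at hp1
    · exact ⟨⟨0, hm⟩⟩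
  have hE : (Matrix.trace (Dφ * matLog Dφ)).re = ∑ i, p i * Real.log (p i) := by
    rw [matLog, dif_pos hφH, traceMulCfc hφH]
    exact Complex.ofReal_re _
  set V : Matrix (Fin m) (Fin m) ℂ := (hφH.eigenvectorUnitary : Matrix (Fin m) (Fin m) ℂ) with hV_def
  set U : Matrix (Fin m) (Fin m) ℂ := (hA.eigenvectorUnitary : Matrix (Fin m) (Fin m) ℂ) with hU_def
  have hVl : star V * V = 1 := (Matrix.mem_unitaryGroup_iff').mp hφH.eigenvectorUnitary.2
  have hVr : V * star V = 1 := (Matrix.mem_unitaryGroup_iff).mp hφH.eigenvectorUnitary.2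
  have hUl : star U * U = 1 := (Matrix.mem_unitaryGroup_iff').mp hA.eigenvectorUnitary.2
  have hUr : U * star U = 1 := (Matrix.mem_unitaryGroup_iff).mp hA.eigenvectorUnitary.2
  set W : Matrix (Fin m) (Fin m) ℂ := star V * U with hW_def
  set B : Matrix (Fin m) (Fin m) ℂ := star V * A * V with hB_def
  have hBW : B = W * diagonal (RCLike.ofReal ∘ ν) * star W := by
    rw [hB_def, hW_def]
    conv_lhs => rw [hA.spectral_theorem, Unitary.conjStarAlgAut_apply]
    rw [← hU_def, Matrix.star_mul, star_star]
    noncomm_ring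
  have hWrow : ∀ i, ∑ j, Complex.normSq (W i j) = 1 := by
    intro i
    have h1 : W * star W = 1 := by
      rw [hW_def, Matrix.star_mul, star_star, show star V * U * (star U * V)
        = star V * (U * star U) * V from by noncomm_ring, hUr, mul_one, hVl]
    have h2 := congrFun (congrFun h1 i) i
    simp only [Matrix.mul_apply, Matrix.star_apply, Matrix.one_apply_eq] at h2
    have h3 : ∑ j, ((Complex.normSq (W i j) : ℂ)) = 1 := by
      rw [← h2]
      refine Finset.sum_congr rfl fun j _ => ?_
      rw [Complex.star_def, Complex.mul_conj]
    exact_mod_cast h3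
  have hWcol : ∀ j, ∑ i, Complex.normSq (W i j) = 1 := by
    intro j
    have h1 : star W * W = 1 := by
      rw [hW_def, Matrix.star_mul, star_star, show star U * V * (star V * U)
        = star U * (V * star V) * U from by noncomm_ring, hVr, mul_one, hUl]
    have h2 := congrFun (congrFun h1 j) j
    simp only [Matrix.mul_apply, Matrix.star_apply, Matrix.one_apply_eq] at h2
    have h3 : ∑ i, ((Complex.normSq (W i j) : ℂ)) = 1 := by
      rw [← h2]
      refine Finset.sum_congr rfl fun i _ => ?_
      rw [Complex.star_def, mul_comm, Complex.mul_conj]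
    exact_mod_cast h3
  set a : Fin m → ℝ := fun i => ∑ j, Complex.normSq (W i j) * ν j with ha_def
  have hBdiag : ∀ i, B i i = ((a i : ℝ) : ℂ) := by
    intro i
    rw [hBW, Matrix.mul_apply]
    simp only [Matrix.mul_diagonal, Matrix.star_apply, Function.comp_apply]
    have hterm : ∀ j, W i j * ((RCLike.ofReal (ν j)) : ℂ) * star (W i j)
        = ((Complex.normSq (W i j) * ν j : ℝ) : ℂ) := by
      intro j
      rw [Complex.star_def, mul_comm (W i j) _, mul_assoc, Complex.mul_conj]
      rw [Complex.ofReal_mul]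
      exact mul_comm _ _
    rw [Finset.sum_congr rfl (fun j _ => hterm j), ha_def]
    norm_cast
  have hTr : (Matrix.trace (Dφ * A)) = ((∑ i, p i * a i : ℝ) : ℂ) := by
    conv_lhs => rw [hφH.spectral_theorem, Unitary.conjStarAlgAut_apply]
    rw [← hV_def, show V * diagonal (RCLike.ofReal ∘ p) * star V * A
        = V * (diagonal (RCLike.ofReal ∘ p) * (star V * A)) from by noncomm_ring,
      Matrix.trace_mul_comm, show diagonal (RCLike.ofReal ∘ p) * (star V * A) * V
        = diagonal (RCLike.ofReal ∘ p) * B from by rw [hB_def]; noncomm_ring]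
    rw [Matrix.trace]
    have : ∀ i, (diagonal (RCLike.ofReal ∘ p) * B).diag i = ((p i * a i : ℝ) : ℂ) := by
      intro i
      rw [Matrix.diag_apply, Matrix.diagonal_mul, hBdiag i]
      push_cast
      rfl
    rw [Finset.sum_congr rfl (fun i _ => this i)]
    push_cast
    rfl
  -- Peierls
  have hPei : ∀ i, Real.exp (a i) ≤ ∑ j, Complex.normSq (W i j) * Real.exp (ν j) := by
    intro i
    have := convexOn_exp.map_sum_le (t := Finset.univ) (w := fun j => Complex.normSq (W i j))
      (p := ν) (fun j _ => Complex.normSq_nonneg _) (hWrow i) (fun j _ => Set.mem_univ _)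
    simpa [smul_eq_mul] using this
  have hsumPei : ∑ i, Real.exp (a i) ≤ ∑ j, Real.exp (ν j) := by
    calc ∑ i, Real.exp (a i) ≤ ∑ i, ∑ j, Complex.normSq (W i j) * Real.exp (ν j) :=
          Finset.sum_le_sum (fun i _ => hPei i)
      _ = ∑ j, (∑ i, Complex.normSq (W i j)) * Real.exp (ν j) := by
          rw [Finset.sum_comm]
          exact Finset.sum_congr rfl fun j _ => (Finset.sum_mul _ _ _).symm
      _ = ∑ j, Real.exp (ν j) := Finset.sum_congr rfl fun j _ => by rw [hWcol j, one_mul]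
  have hTrExp : (Matrix.trace (NormedSpace.exp A)).re = ∑ j, Real.exp (ν j) := by
    rw [expCfc A hA, traceCfc hA]
    exact Complex.ofReal_re _
  have hgc := gibbs_classical p a hp0 hp1
  have hTrRe : (Matrix.trace (Dφ * A)).re = ∑ i, p i * a i := by rw [hTr]; exact Complex.ofReal_re _
  rw [hTrRe, hE, hTrExp]
  have hlog : Real.log (∑ i, Real.exp (a i)) ≤ Real.log (∑ j, Real.exp (ν j)) :=
    Real.log_le_log (Finset.sum_pos (fun i _ => Real.exp_pos _) Finset.univ_nonempty) hsumPei
  calc ∑ i, p i * a i - ∑ i, p i * Real.log (p i)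
      = ∑ i, (p i * a i - p i * Real.log (p i)) := by rw [Finset.sum_sub_distrib]
    _ ≤ Real.log (∑ i, Real.exp (a i)) := hgc
    _ ≤ Real.log (∑ j, Real.exp (ν j)) := hlog

lemma contOnFinite {s : Set ℝ} (hs : s.Finite) (f : ℝ → ℝ) : ContinuousOn f s := by
  have : DiscreteTopology s := hs.instDiscreteTopology
  rw [continuousOn_iff_continuous_restrict]
  exact continuous_of_discreteTopology

/-- For Hermitian `X, H`, the Gibbs state `ρ` for `H`, the cumulant generating function
`C(t) = log Tr(exp(tX-H)) - log Tr(exp(-H))` and its Legendre transform `I`, every state `φ`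
satisfies `S(φ‖ρ) ≥ I(φ(X))`. -/
theorem relEnt_ge_rate_function {m : ℕ} (X H : Matrix (Fin m) (Fin m) ℂ)
    (hX : X.IsHermitian) (hH : H.IsHermitian)
    (Dφ : Matrix (Fin m) (Fin m) ℂ) (hφ : Dφ.PosSemidef) (hφ1 : Matrix.trace Dφ = 1)
    (Dρ : Matrix (Fin m) (Fin m) ℂ)
    (hρ : Dρ = ((Matrix.trace (NormedSpace.exp (-H))).re)⁻¹ • NormedSpace.exp (-H)) :
    (⨆ t : ℝ,
      ((t * (Matrix.trace (Dφ * X)).re -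
        (Real.log (Matrix.trace (NormedSpace.exp (t • X - H))).re -
          Real.log (Matrix.trace (NormedSpace.exp (-H))).re) : ℝ) : EReal)) ≤
      (relEnt Dφ Dρ : ℝ) := by
  classical
  have hm : Nonempty (Fin m) := by
    rcases Nat.eq_zero_or_pos m with rfl | h
    · exfalso
      have : Matrix.trace Dφ = 0 := by
        rw [Matrix.trace]
        exact Finset.sum_of_isEmpty _
      rw [this] at hφ1
      exact zero_ne_one hφ1
    · exact ⟨⟨0, h⟩⟩
  have hH' : (-H).IsHermitian := hH.neg
  have hsa : IsSelfAdjoint (-H) := hH'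
  set Z : ℝ := (Matrix.trace (NormedSpace.exp (-H))).re with hZ
  have hTrexp : Matrix.trace (NormedSpace.exp (-H))
      = ((∑ j, Real.exp (hH'.eigenvalues j) : ℝ) : ℂ) := by
    rw [expCfc _ hH', traceCfc]
  have hZval : Z = ∑ j, Real.exp (hH'.eigenvalues j) := by
    rw [hZ, hTrexp]; exact Complex.ofReal_re _
  have hZpos : 0 < Z :=
    hZval ▸ Finset.sum_pos (fun j _ => Real.exp_pos _) Finset.univ_nonempty
  have hDρ2 : Dρ = cfc (fun x => Z⁻¹ * Real.exp x) (-H) := by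
    rw [hρ, expCfc _ hH']
    rw [← hH'.cfc_eq]
    rw [cfc_const_mul Z⁻¹ Real.exp (-H) (contOnFinite (Matrix.finite_real_spectrum (A := -H)) _)]
  have hmatLog : matLog Dρ = algebraMap ℝ (Matrix (Fin m) (Fin m) ℂ) (-Real.log Z) + (-H) := by
    have hDρH : Dρ.IsHermitian := by
      rw [hDρ2]
      exact cfc_predicate _ _
    rw [matLog, dif_pos hDρH, ← hDρH.cfc_eq]
    conv_lhs => rw [hDρ2]
    rw [← cfc_comp Real.log (fun x => Z⁻¹ * Real.exp x) (-H) hsa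
      (contOnFinite ((Matrix.finite_real_spectrum (A := -H)).image _) _)
      (contOnFinite (Matrix.finite_real_spectrum (A := -H)) _)]
    have hfun : Real.log ∘ (fun x => Z⁻¹ * Real.exp x) = fun x => -Real.log Z + x := by
      funext x
      simp only [Function.comp_apply]
      rw [Real.log_mul (inv_ne_zero hZpos.ne') (Real.exp_ne_zero x), Real.log_inv, Real.log_exp]
    rw [hfun, cfc_const_add (-Real.log Z) (fun x => x) (-H)
      (contOnFinite (Matrix.finite_real_spectrum (A := -H)) _) hsa, cfc_id' ℝ (-H)]
  have htrLog : (Matrix.trace (Dφ * matLog Dρ)).re = -Real.log Z - (Matrix.trace (Dφ * H)).re := by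
    rw [hmatLog, mul_add, Matrix.trace_add, mul_neg, Matrix.trace_neg,
      Algebra.algebraMap_eq_smul_one, mul_smul_comm, mul_one, Matrix.trace_smul, hφ1]
    simp [Complex.real_smul, Complex.add_re, Complex.neg_re, Complex.ofReal_re, sub_eq_add_neg]
  refine iSup_le fun t => ?_
  rw [EReal.coe_le_coe_iff]
  have hXt : (t • X).IsHermitian := by
    show (t • X)ᴴ = t • X
    rw [Matrix.conjTranspose_smul, star_trivial, hX.eq]
  have hAt : (t • X - H).IsHermitian := hXt.sub hH
  have hkey := gibbs_var (t • X - H) Dφ hAt hφ hφ1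
  have hlin : (Matrix.trace (Dφ * (t • X - H))).re
      = t * (Matrix.trace (Dφ * X)).re - (Matrix.trace (Dφ * H)).re := by
    rw [mul_sub, Matrix.trace_sub, mul_smul_comm, Matrix.trace_smul, Complex.sub_re]
    congr 1
    rw [Complex.real_smul, Complex.mul_re, Complex.ofReal_re, Complex.ofReal_im]
    ring
  rw [hlin] at hkey
  rw [relEnt, Complex.sub_re, htrLog]
  linarith
end

section
/- If A and B are Hermitian m×m matrices, then |log Tr(exp A) - log Tr(exp B)| ≤ ‖A - B‖, where ‖·‖ is the operator norm. -/
open Matrix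
open scoped Matrix.Norms.L2Operator

lemma quad_bound {m : ℕ} (M : Matrix (Fin m) (Fin m) ℂ) (v : Fin m → ℂ)
    (hv : ∑ k, Complex.normSq (v k) = 1) :
    |(dotProduct (star v) (M *ᵥ v)).re| ≤ ‖M‖ := by
  set x : EuclideanSpace ℂ (Fin m) := (EuclideanSpace.equiv (Fin m) ℂ).symm v with hx
  have hxn : ‖x‖ = 1 := by
    rw [EuclideanSpace.norm_eq]
    simp only [hx]
    rw [show (1:ℝ) = Real.sqrt 1 by simp]
    congr 1
    simpa [Complex.sq_norm] using hv
  have h1 : (dotProduct (star v) (M *ᵥ v)) = inner ℂ x ((EuclideanSpace.equiv (Fin m) ℂ).symm (M *ᵥ v)) := by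
    rw [EuclideanSpace.inner_eq_star_dotProduct]
    exact dotProduct_comm _ _
  have h2 : ‖(inner ℂ x ((EuclideanSpace.equiv (Fin m) ℂ).symm (M *ᵥ v)) : ℂ)‖ ≤ ‖M‖ := by
    calc ‖(inner ℂ x ((EuclideanSpace.equiv (Fin m) ℂ).symm (M *ᵥ v)) : ℂ)‖
        ≤ ‖x‖ * ‖(EuclideanSpace.equiv (Fin m) ℂ).symm (M *ᵥ v)‖ := norm_inner_le_norm _ _
      _ ≤ ‖x‖ * (‖M‖ * ‖x‖) := by
          gcongr
          exact M.l2_opNorm_mulVec x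
      _ = ‖M‖ := by rw [hxn]; ring
  calc |(dotProduct (star v) (M *ᵥ v)).re| ≤ ‖(dotProduct (star v) (M *ᵥ v))‖ :=
        Complex.abs_re_le_norm _
    _ ≤ ‖M‖ := by rw [h1]; exact h2

lemma key_ineq {m : ℕ} (A B : Matrix (Fin m) (Fin m) ℂ)
    (hA : A.IsHermitian) (hB : B.IsHermitian) :
    ∑ i, Real.exp (hA.eigenvalues i) ≤
      Real.exp ‖A - B‖ * ∑ j, Real.exp (hB.eigenvalues j) := by
  set V : Matrix (Fin m) (Fin m) ℂ := (hA.eigenvectorUnitary : Matrix (Fin m) (Fin m) ℂ) with hV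
  set W : Matrix (Fin m) (Fin m) ℂ := (hB.eigenvectorUnitary : Matrix (Fin m) (Fin m) ℂ) with hW
  have hVs : star V * V = 1 := Matrix.mem_unitaryGroup_iff'.mp hA.eigenvectorUnitary.2
  have hWs : star W * W = 1 := Matrix.mem_unitaryGroup_iff'.mp hB.eigenvectorUnitary.2
  have hVs' : V * star V = 1 := Matrix.mem_unitaryGroup_iff.mp hA.eigenvectorUnitary.2
  have hWs' : W * star W = 1 := Matrix.mem_unitaryGroup_iff.mp hB.eigenvectorUnitary.2
  set U : Matrix (Fin m) (Fin m) ℂ := star W * V with hU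
  have hUstar : star U = star V * W := by rw [hU, StarMul.star_mul, star_star]
  have hUs : star U * U = 1 := by
    rw [hUstar, hU, Matrix.mul_assoc, ← Matrix.mul_assoc W, hWs', Matrix.one_mul, hVs]
  have hUs' : U * star U = 1 := by
    rw [hUstar, hU, Matrix.mul_assoc, ← Matrix.mul_assoc V, hVs', Matrix.one_mul, hWs]
  set p : Fin m → Fin m → ℝ := fun i j => Complex.normSq (U j i) with hp
  have hcol : ∀ i, ∑ j, p i j = 1 := by
    intro i
    have h := congrFun (congrFun hUs i) i
    have : ((star U * U) i i).re = 1 := by rw [h]; simp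
    rw [Matrix.mul_apply] at this
    rw [← this, Complex.re_sum]
    refine Finset.sum_congr rfl fun j _ => ?_
    simp [Matrix.star_apply, ← Complex.normSq_eq_conj_mul_self, hp]
  have hrow : ∀ j, ∑ i, p i j = 1 := by
    intro j
    have h := congrFun (congrFun hUs' j) j
    have : ((U * star U) j j).re = 1 := by rw [h]; simp
    rw [Matrix.mul_apply] at this
    rw [← this, Complex.re_sum]
    refine Finset.sum_congr rfl fun i _ => ?_
    simp [Matrix.star_apply, Complex.mul_conj, hp]
  have hpnn : ∀ i j, 0 ≤ p i j := fun i j => Complex.normSq_nonneg _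
  -- diagonalizations
  have hAdiag : star V * A * V = diagonal (RCLike.ofReal ∘ hA.eigenvalues) :=
    by have := hA.conjStarAlgAut_star_eigenvectorUnitary; rwa [Unitary.conjStarAlgAut_apply, Unitary.coe_star, star_star] at this
  have hBspec : B = W * diagonal (RCLike.ofReal ∘ hB.eigenvalues) * star W :=
    by have := hB.spectral_theorem; rwa [Unitary.conjStarAlgAut_apply] at this
  have hBform : star V * B * V = star U * diagonal (RCLike.ofReal ∘ hB.eigenvalues) * U := by
    rw [hUstar, hU]
    conv_lhs => rw [hBspec]
    noncomm_ring
  -- entrywise identities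
  have hBentry : ∀ i, ((star V * B * V) i i).re = ∑ j, p i j * hB.eigenvalues j := by
    intro i
    rw [hBform, Matrix.mul_apply, Complex.re_sum]
    refine Finset.sum_congr rfl fun j _ => ?_
    rw [Matrix.mul_apply]
    have : ∀ k, (star U) i j * (diagonal (RCLike.ofReal ∘ hB.eigenvalues)) j k = 0 ∨ k = j := by
      intro k
      by_cases h : j = k
      · right; exact h.symm
      · left; simp [Matrix.diagonal_apply_ne _ h]
    rw [Finset.sum_eq_single j]
    · simp only [Matrix.star_apply, Matrix.diagonal_apply_eq, Function.comp_apply,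
        Complex.star_def]
      have e : (starRingEnd ℂ) (U j i) * (RCLike.ofReal (hB.eigenvalues j) : ℂ) * U j i
          = (RCLike.ofReal (hB.eigenvalues j) : ℂ) * (U j i * (starRingEnd ℂ) (U j i)) := by ring
      rw [e, Complex.mul_conj]
      have e2 : (RCLike.ofReal (hB.eigenvalues j) : ℂ) = ((hB.eigenvalues j : ℝ) : ℂ) := rfl
      rw [e2, ← Complex.ofReal_mul, Complex.ofReal_re, hp, mul_comm]
    · intro k _ hk
      simp [Matrix.diagonal_apply_ne _ hk]
    · intro h; exact absurd (Finset.mem_univ j) h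
  have hAentry : ∀ i, ((star V * A * V) i i).re = hA.eigenvalues i := by
    intro i
    rw [hAdiag]
    simp
  -- perturbation bound
  have hpert : ∀ i, |((star V * (A - B) * V) i i).re| ≤ ‖A - B‖ := by
    intro i
    set v : Fin m → ℂ := fun k => V k i with hv
    have hent : (star V * (A - B) * V) i i = dotProduct (star v) ((A - B) *ᵥ v) := by
      rw [Matrix.mul_apply]
      simp only [dotProduct, Matrix.mulVec, Matrix.mul_apply, Matrix.star_apply,
        Pi.star_apply, dotProduct, hv, Finset.sum_mul, Finset.mul_sum]
      rw [Finset.sum_comm]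
      refine Finset.sum_congr rfl fun k _ => Finset.sum_congr rfl fun l _ => by ring
    have hnorm : ∑ k, Complex.normSq (v k) = 1 := by
      have h := congrFun (congrFun hVs i) i
      have h2 : ((star V * V) i i).re = 1 := by rw [h]; simp
      rw [Matrix.mul_apply] at h2
      rw [← h2, Complex.re_sum]
      refine Finset.sum_congr rfl fun k _ => ?_
      simp [Matrix.star_apply, ← Complex.normSq_eq_conj_mul_self, hv]
    rw [hent]
    exact quad_bound _ _ hnorm
  -- main chain
  have hmain : ∀ i, Real.exp (hA.eigenvalues i) ≤
      Real.exp ‖A - B‖ * ∑ j, p i j * Real.exp (hB.eigenvalues j) := by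
    intro i
    have hsplit : hA.eigenvalues i =
        ((star V * (A - B) * V) i i).re + ∑ j, p i j * hB.eigenvalues j := by
      rw [← hAentry i, ← hBentry i]
      have : star V * (A - B) * V = star V * A * V - star V * B * V := by noncomm_ring
      rw [this]
      simp [Matrix.sub_apply]
    have h1 : hA.eigenvalues i ≤ ‖A - B‖ + ∑ j, p i j * hB.eigenvalues j := by
      rw [hsplit]
      have := hpert i
      have := abs_le.mp this
      linarith [this.2]
    calc Real.exp (hA.eigenvalues i)
        ≤ Real.exp (‖A - B‖ + ∑ j, p i j * hB.eigenvalues j) := Real.exp_le_exp.mpr h1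
      _ = Real.exp ‖A - B‖ * Real.exp (∑ j, p i j * hB.eigenvalues j) := Real.exp_add _ _
      _ ≤ Real.exp ‖A - B‖ * ∑ j, p i j * Real.exp (hB.eigenvalues j) := by
          refine mul_le_mul_of_nonneg_left ?_ (Real.exp_pos _).le
          have := convexOn_exp.map_sum_le (t := Finset.univ)
              (w := p i) (p := fun j => hB.eigenvalues j)
              (fun j _ => hpnn i j) (hcol i) (fun j _ => Set.mem_univ _)
          simpa [smul_eq_mul] using this
  calc ∑ i, Real.exp (hA.eigenvalues i)
      ≤ ∑ i, Real.exp ‖A - B‖ * ∑ j, p i j * Real.exp (hB.eigenvalues j) :=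
        Finset.sum_le_sum fun i _ => hmain i
    _ = Real.exp ‖A - B‖ * ∑ j, Real.exp (hB.eigenvalues j) := by
        rw [← Finset.mul_sum]
        congr 1
        rw [Finset.sum_comm]
        refine Finset.sum_congr rfl fun j _ => ?_
        rw [← Finset.sum_mul, hrow j, one_mul]

lemma trace_exp_re_eq {m : ℕ} (A : Matrix (Fin m) (Fin m) ℂ) (hA : A.IsHermitian) :
    (Matrix.trace (NormedSpace.exp A)).re = ∑ i, Real.exp (hA.eigenvalues i) := by
  set V : Matrix (Fin m) (Fin m) ℂ := (hA.eigenvectorUnitary : Matrix (Fin m) (Fin m) ℂ) with hV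
  have hu : IsUnit V := (Unitary.toUnits hA.eigenvectorUnitary).isUnit
  have hstar : star V = V⁻¹ := by
    rw [Matrix.inv_eq_left_inv]
    exact Matrix.mem_unitaryGroup_iff'.mp hA.eigenvectorUnitary.2
  set D : Matrix (Fin m) (Fin m) ℂ := diagonal (RCLike.ofReal ∘ hA.eigenvalues) with hD
  have key : NormedSpace.exp A = V * NormedSpace.exp D * star V := by
    have h1 : A = V * D * V⁻¹ := by rw [← hstar]; have := hA.spectral_theorem; rwa [Unitary.conjStarAlgAut_apply] at this
    rw [h1, Matrix.exp_conj V D hu, hstar]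
  rw [key, Matrix.trace_mul_cycle, hstar,
    Matrix.nonsing_inv_mul _ ((Matrix.isUnit_iff_isUnit_det V).mp hu), Matrix.one_mul,
    hD, Matrix.exp_diagonal, Matrix.trace_diagonal]
  rw [Complex.re_sum]
  congr 1 with i
  simp [← Complex.exp_eq_exp_ℂ, Complex.exp_ofReal_re]

/-- If `A` and `B` are Hermitian `m × m` matrices, then
`|log Tr(exp A) - log Tr(exp B)| ≤ ‖A - B‖` in the operator norm. -/
theorem abs_log_trace_exp_sub_le {m : ℕ} (A B : Matrix (Fin m) (Fin m) ℂ)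
    (hA : A.IsHermitian) (hB : B.IsHermitian) :
    |Real.log (Matrix.trace (NormedSpace.exp A)).re -
      Real.log (Matrix.trace (NormedSpace.exp B)).re| ≤ ‖A - B‖ := by
  rcases Nat.eq_zero_or_pos m with hm | hm
  · subst hm
    have hzA : (Matrix.trace (NormedSpace.exp A)) = 0 := by
      simp [Matrix.trace]
    have hzB : (Matrix.trace (NormedSpace.exp B)) = 0 := by
      simp [Matrix.trace]
    rw [hzA, hzB]
    simp
  · have : Nonempty (Fin m) := Fin.pos_iff_nonempty.mp hm
    rw [trace_exp_re_eq A hA, trace_exp_re_eq B hB]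
    set SA := ∑ i, Real.exp (hA.eigenvalues i) with hSA
    set SB := ∑ j, Real.exp (hB.eigenvalues j) with hSB
    have hSApos : 0 < SA := Finset.sum_pos (fun i _ => Real.exp_pos _) Finset.univ_nonempty
    have hSBpos : 0 < SB := Finset.sum_pos (fun i _ => Real.exp_pos _) Finset.univ_nonempty
    have h1 : Real.log SA ≤ ‖A - B‖ + Real.log SB := by
      calc Real.log SA ≤ Real.log (Real.exp ‖A - B‖ * SB) :=
            Real.log_le_log hSApos (key_ineq A B hA hB)
        _ = ‖A - B‖ + Real.log SB := by
            rw [Real.log_mul (Real.exp_ne_zero _) (ne_of_gt hSBpos), Real.log_exp]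
    have h2 : Real.log SB ≤ ‖A - B‖ + Real.log SA := by
      calc Real.log SB ≤ Real.log (Real.exp ‖B - A‖ * SA) :=
            Real.log_le_log hSBpos (key_ineq B A hB hA)
        _ = ‖A - B‖ + Real.log SA := by
            rw [Real.log_mul (Real.exp_ne_zero _) (ne_of_gt hSApos), Real.log_exp,
              norm_sub_rev]
    rw [abs_sub_le_iff]
    constructor <;> linarith
end
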